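/- For every integer d ≥ 1 and every deterministic two-bit-feedback algorithm Alg for contextual bilateral trade in dimension d that posts p_t ≤ q_t at every round (per-round budget balance), there exists an instance with horizon T = d, contexts x_t = e_t (the t-th standard basis vector of ℝ^d), and vectors s, b ∈ ℝ^d whose coordinates satisfy (s_j, b_j) ∈ {(0, 1/3), (2/3, 1)} for every j, such that the gain-from-trade regret of Alg on this instance is at least d/6. -/

import Mathlib

/-!
The adversary fixes the coordinates of `(s, b)` one round at a time, after seeing the price pair
the algorithm would post: if the buyer price is `q ≤ 1/3` it makes the pair `(2/3, 1)`, otherwise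
`(0, 1/3)`. Since `p ≤ q`, the seller rejects in the first case and the buyer in the second, so no
trade ever happens, while every round has gain from trade `1/3`. This adaptive choice is a
legitimate fixed instance because the prices of round `t` only depend on the coordinates of
earlier rounds, which are revealed to the algorithm only through the contexts `e_r`, `r < t`.
-/

open MeasureTheory Finset
open scoped RealInnerProductSpace

noncomputable section

/-- A deterministic two-bit-feedback algorithm: from the history (context, seller price,
buyer price, seller bit, buyer bit) and the current context, produce a pair of prices. -/
abbrev Algo2 (d : ℕ) :=
  List (EuclideanSpace ℝ (Fin d) × ℝ × ℝ × Bool × Bool) → EuclideanSpace ℝ (Fin d) → ℝ × ℝ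

/-- The history of the first `t` rounds under two-bit feedback. -/
def hist2 {d : ℕ} (Alg : Algo2 d) (s b : EuclideanSpace ℝ (Fin d))
    (x : ℕ → EuclideanSpace ℝ (Fin d)) :
    ℕ → List (EuclideanSpace ℝ (Fin d) × ℝ × ℝ × Bool × Bool)
  | 0 => []
  | t + 1 =>
    let h := hist2 Alg s b x t
    let pq := Alg h (x t)
    h ++ [(x t, pq.1, pq.2, decide (⟪s, x t⟫ ≤ pq.1), decide (pq.2 ≤ ⟪b, x t⟫))]

/-- The pair of prices posted at round `t`. -/
def price2 {d : ℕ} (Alg : Algo2 d) (s b : EuclideanSpace ℝ (Fin d))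
    (x : ℕ → EuclideanSpace ℝ (Fin d)) (t : ℕ) : ℝ × ℝ :=
  Alg (hist2 Alg s b x t) (x t)

/-- The gain from trade of the algorithm at round `t`. -/
def gft2 {d : ℕ} (Alg : Algo2 d) (s b : EuclideanSpace ℝ (Fin d))
    (x : ℕ → EuclideanSpace ℝ (Fin d)) (t : ℕ) : ℝ :=
  if ⟪s, x t⟫ ≤ (price2 Alg s b x t).1 ∧ (price2 Alg s b x t).2 ≤ ⟪b, x t⟫ then
    ⟪b - s, x t⟫ else 0

/-- The profit of the algorithm at round `t`. -/
def profit2 {d : ℕ} (Alg : Algo2 d) (s b : EuclideanSpace ℝ (Fin d))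
    (x : ℕ → EuclideanSpace ℝ (Fin d)) (t : ℕ) : ℝ :=
  if ⟪s, x t⟫ ≤ (price2 Alg s b x t).1 ∧ (price2 Alg s b x t).2 ≤ ⟪b, x t⟫ then
    (price2 Alg s b x t).2 - (price2 Alg s b x t).1 else 0

/-- The gain-from-trade regret over horizon `T`. -/
def gftRegret2 {d : ℕ} (Alg : Algo2 d) (s b : EuclideanSpace ℝ (Fin d))
    (x : ℕ → EuclideanSpace ℝ (Fin d)) (T : ℕ) : ℝ :=
  ∑ t ∈ Finset.range T, max ⟪b - s, x t⟫ 0 - ∑ t ∈ Finset.range T, gft2 Alg s b x t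

/-- The profit regret over horizon `T`. -/
def profitRegret2 {d : ℕ} (Alg : Algo2 d) (s b : EuclideanSpace ℝ (Fin d))
    (x : ℕ → EuclideanSpace ℝ (Fin d)) (T : ℕ) : ℝ :=
  ∑ t ∈ Finset.range T, max ⟪b - s, x t⟫ 0 - ∑ t ∈ Finset.range T, profit2 Alg s b x t

theorem hist2_congr {d : ℕ} (Alg : Algo2 d) {s b s' b' : EuclideanSpace ℝ (Fin d)}
    {x : ℕ → EuclideanSpace ℝ (Fin d)} {t : ℕ}
    (hs : ∀ r < t, ⟪s, x r⟫ = ⟪s', x r⟫) (hb : ∀ r < t, ⟪b, x r⟫ = ⟪b', x r⟫) :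
    hist2 Alg s b x t = hist2 Alg s' b' x t := by
  induction t with
  | zero => rfl
  | succ t ih =>
    simp only [hist2, ih (fun r hr => hs r (by omega)) (fun r hr => hb r (by omega)),
      hs t t.lt_succ_self, hb t t.lt_succ_self]

theorem price2_congr {d : ℕ} (Alg : Algo2 d) {s b s' b' : EuclideanSpace ℝ (Fin d)}
    {x : ℕ → EuclideanSpace ℝ (Fin d)} {t : ℕ}
    (hs : ∀ r < t, ⟪s, x r⟫ = ⟪s', x r⟫) (hb : ∀ r < t, ⟪b, x r⟫ = ⟪b', x r⟫) :
    price2 Alg s b x t = price2 Alg s' b' x t := by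
  rw [price2, price2, hist2_congr Alg hs hb]

theorem gft2_eq_zero_of_no_trade {d : ℕ} {Alg : Algo2 d} {s b : EuclideanSpace ℝ (Fin d)}
    {x : ℕ → EuclideanSpace ℝ (Fin d)} {t : ℕ}
    (h : (price2 Alg s b x t).1 < ⟪s, x t⟫ ∨ ⟪b, x t⟫ < (price2 Alg s b x t).2) :
    gft2 Alg s b x t = 0 := by
  rw [gft2, if_neg]
  rintro ⟨hs, hb⟩
  rcases h with h | h <;> linarith

namespace TwoBitLowerBound

variable {d : ℕ}

def basisContext (d : ℕ) (t : ℕ) : EuclideanSpace ℝ (Fin d) :=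
  if h : t < d then EuclideanSpace.single (⟨t, h⟩ : Fin d) 1 else 0

def seller (d : ℕ) (c : ℕ → Bool) : EuclideanSpace ℝ (Fin d) :=
  WithLp.toLp 2 fun j => if c j then 2/3 else 0

def buyer (d : ℕ) (c : ℕ → Bool) : EuclideanSpace ℝ (Fin d) :=
  WithLp.toLp 2 fun j => if c j then 1 else 1/3

@[simp]
theorem seller_apply (c : ℕ → Bool) (j : Fin d) : seller d c j = if c j then 2/3 else 0 := rfl

@[simp]
theorem buyer_apply (c : ℕ → Bool) (j : Fin d) : buyer d c j = if c j then 1 else 1/3 := rfl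

theorem inner_basisContext (v : EuclideanSpace ℝ (Fin d)) {t : ℕ} (ht : t < d) :
    ⟪v, basisContext d t⟫ = v ⟨t, ht⟩ := by
  simp [basisContext, ht, EuclideanSpace.inner_single_right]

theorem inner_basisContext_of_le (v : EuclideanSpace ℝ (Fin d)) {t : ℕ} (ht : d ≤ t) :
    ⟪v, basisContext d t⟫ = 0 := by
  simp [basisContext, Nat.not_lt.mpr ht]

theorem inner_basisContext_congr {v w : EuclideanSpace ℝ (Fin d)} {t : ℕ}
    (h : ∀ ht : t < d, v ⟨t, ht⟩ = w ⟨t, ht⟩) :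
    ⟪v, basisContext d t⟫ = ⟪w, basisContext d t⟫ := by
  rcases Nat.lt_or_ge t d with ht | ht
  · rw [inner_basisContext _ ht, inner_basisContext _ ht, h ht]
  · rw [inner_basisContext_of_le _ ht, inner_basisContext_of_le _ ht]

theorem inner_buyer_sub_seller (c : ℕ → Bool) {t : ℕ} (ht : t < d) :
    ⟪buyer d c - seller d c, basisContext d t⟫ = 1/3 := by
  rw [inner_basisContext _ ht, PiLp.sub_apply, buyer_apply, seller_apply]
  cases c t <;> norm_num

theorem seller_buyer_mem (c : ℕ → Bool) (j : Fin d) :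
    (seller d c j = 0 ∧ buyer d c j = 1/3) ∨ (seller d c j = 2/3 ∧ buyer d c j = 1) := by
  cases c j <;> norm_num

def adversary (Alg : Algo2 d) (t : ℕ) : Bool :=
  let c : ℕ → Bool := fun r => if r < t then adversary Alg r else false
  decide ((price2 Alg (seller d c) (buyer d c) (basisContext d) t).2 ≤ 1/3)
termination_by t
decreasing_by assumption

theorem adversary_eq (Alg : Algo2 d) (t : ℕ) :
    adversary Alg t = decide ((price2 Alg (seller d (adversary Alg)) (buyer d (adversary Alg))
      (basisContext d) t).2 ≤ 1/3) := by
  rw [adversary]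
  congr 3
  exact price2_congr Alg
    (fun r hr => inner_basisContext_congr fun _ => by simp only [seller_apply, if_pos hr])
    (fun r hr => inner_basisContext_congr fun _ => by simp only [buyer_apply, if_pos hr])

theorem gft2_adversary (Alg : Algo2 d) (hbb : ∀ h x, (Alg h x).1 ≤ (Alg h x).2)
    {t : ℕ} (ht : t < d) :
    gft2 Alg (seller d (adversary Alg)) (buyer d (adversary Alg)) (basisContext d) t = 0 := by
  set c := adversary Alg
  set pq := price2 Alg (seller d c) (buyer d c) (basisContext d) t
  have hpq : pq.1 ≤ pq.2 := hbb _ _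
  have hq : c t = decide (pq.2 ≤ 1/3) := adversary_eq Alg t
  apply gft2_eq_zero_of_no_trade
  rw [inner_basisContext _ ht, inner_basisContext _ ht, seller_apply, buyer_apply]
  cases hc : c t
  · rw [hc, eq_comm, decide_eq_false_iff_not] at hq
    right
    norm_num
    linarith
  · rw [hc, eq_comm, decide_eq_true_iff] at hq
    left
    norm_num
    linarith

end TwoBitLowerBound

open TwoBitLowerBound in
theorem two_bit_gft_lower_bound_general
    (d : ℕ) (Alg : Algo2 d)
    (hbb : ∀ h x, (Alg h x).1 ≤ (Alg h x).2) :
    ∃ s b : EuclideanSpace ℝ (Fin d),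
      (∀ j : Fin d, (s j = 0 ∧ b j = 1/3) ∨ (s j = 2/3 ∧ b j = 1)) ∧
      gftRegret2 Alg s b
        (fun t => if h : t < d then EuclideanSpace.single (⟨t, h⟩ : Fin d) 1 else 0) d
        ≥ (d : ℝ) / 6 := by
  refine ⟨seller d (adversary Alg), buyer d (adversary Alg), seller_buyer_mem _, ?_⟩
  change (d : ℝ) / 6 ≤ gftRegret2 Alg _ _ (basisContext d) d
  rw [gftRegret2,
    sum_congr rfl fun t ht => by rw [inner_buyer_sub_seller _ (mem_range.mp ht)],
    sum_congr rfl fun t ht => gft2_adversary Alg hbb (mem_range.mp ht)]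
  norm_num
  linarith [d.cast_nonneg (α := ℝ)]

/-- Proposition 4.3 (lower bound for efficiency maximization with two-bit feedback): any
per-round budget balanced deterministic algorithm suffers gain-from-trade regret at least
`d/6` on some instance with horizon `d`, contexts the standard basis vectors, and
coordinates of `(s, b)` in `{(0, 1/3), (2/3, 1)}`. -/
theorem two_bit_gft_lower_bound
    (d : ℕ) (hd : 1 ≤ d) (Alg : Algo2 d)
    (hbb : ∀ h x, (Alg h x).1 ≤ (Alg h x).2) :
    ∃ s b : EuclideanSpace ℝ (Fin d),
      (∀ j : Fin d, (s j = 0 ∧ b j = 1/3) ∨ (s j = 2/3 ∧ b j = 1)) ∧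
      gftRegret2 Alg s b
        (fun t => if h : t < d then EuclideanSpace.single (⟨t, h⟩ : Fin d) 1 else 0) d
        ≥ (d : ℝ) / 6 :=
  two_bit_gft_lower_bound_general d Alg hbb

end
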